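/- For a t.d.s. (X,T), the following are equivalent: (1) (X,T) is weakly mixing with dense distal sets; (2) the hyperspace system (K(X), T_K) is weakly mixing with dense distal points; (3) (K(X), T_K) is weakly mixing with dense distal sets. -/

import Mathlib

open MeasureTheory Topology Set Function TopologicalSpace

noncomputable section

namespace Paper

/-- The orbit closure of a point. -/
def orbitClosure {α : Type*} [TopologicalSpace α] (T : α → α) (x : α) : Set α :=
  closure (Set.range fun n : ℕ => T^[n] x)

/-- Topological transitivity: `N(U,V)` is infinite for all non-empty open `U, V`. -/
def IsTransitive {α : Type*} [TopologicalSpace α] (T : α → α) : Prop :=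
  ∀ U V : Set α, IsOpen U → U.Nonempty → IsOpen V → V.Nonempty →
    {n : ℕ | (U ∩ T^[n] ⁻¹' V).Nonempty}.Infinite

/-- Weak mixing: the product system is transitive. -/
def IsWeaklyMixing {α : Type*} [TopologicalSpace α] (T : α → α) : Prop :=
  IsTransitive (Prod.map T T)

/-- Total transitivity. -/
def IsTotallyTransitive {α : Type*} [TopologicalSpace α] (T : α → α) : Prop :=
  ∀ n : ℕ, 0 < n → IsTransitive (T^[n])

/-- A minimal point: its orbit closure is a minimal subsystem. -/
def IsMinimalPoint {α : Type*} [TopologicalSpace α] (T : α → α) (x : α) : Prop :=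
  ∀ Y : Set α, Y.Nonempty → IsClosed Y → MapsTo T Y Y → Y ⊆ orbitClosure T x →
    Y = orbitClosure T x

def IsPeriodicPoint {α : Type*} (T : α → α) (x : α) : Prop :=
  ∃ n : ℕ, 0 < n ∧ T^[n] x = x

def IsPeriodicSystem {α : Type*} (T : α → α) : Prop :=
  ∃ m : ℕ, 0 < m ∧ T^[m] = id

def IsPointwisePeriodic {α : Type*} (T : α → α) : Prop :=
  ∀ x : α, IsPeriodicPoint T x

def IsMSystem {α : Type*} [TopologicalSpace α] (T : α → α) : Prop :=
  IsTransitive T ∧ Dense {x : α | IsMinimalPoint T x}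

def IsPSystem {α : Type*} [TopologicalSpace α] (T : α → α) : Prop :=
  IsTransitive T ∧ Dense {x : α | IsPeriodicPoint T x}

/-- An E-system: transitive with an invariant (Borel) probability measure of full support. -/
def IsESystem {α : Type*} [TopologicalSpace α] (T : α → α) : Prop :=
  IsTransitive T ∧
    let _i : MeasurableSpace α := borel α
    ∃ μ : Measure α, IsProbabilityMeasure μ ∧ μ.map T = μ ∧
      ∀ U : Set α, IsOpen U → U.Nonempty → 0 < μ U

/-- A proximal pair: the orbit closure of `(x, y)` meets the diagonal. -/
def IsProximalPair {α : Type*} [TopologicalSpace α] (T : α → α) (x y : α) : Prop :=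
  ∃ z : α, (z, z) ∈ closure (Set.range fun n : ℕ => (T^[n] x, T^[n] y))

def IsDistalPoint {α : Type*} [TopologicalSpace α] (T : α → α) (x : α) : Prop :=
  ∀ y ∈ orbitClosure T x, IsProximalPair T x y → y = x

def IsDistalSystem {α : Type*} [TopologicalSpace α] (T : α → α) : Prop :=
  ∀ x y : α, IsProximalPair T x y → x = y

/-- The induced map on the hyperspace of non-empty compact (= closed) subsets. -/
def TK {α : Type*} [TopologicalSpace α] (T : α → α) (hT : Continuous T)
    (C : NonemptyCompacts α) : NonemptyCompacts α :=
  ⟨⟨T '' (C : Set α), C.isCompact.image hT⟩, C.nonempty.image T⟩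

/-- The induced map on the space of Borel probability measures. -/
def TM {α : Type*} [TopologicalSpace α] [MeasurableSpace α] [BorelSpace α] (T : α → α)
    (hT : Continuous T) (μ : ProbabilityMeasure α) : ProbabilityMeasure α :=
  μ.map hT.measurable.aemeasurable

/-- Almost dense periodic sets. -/
def AlmostDensePeriodicSets {α : Type*} [TopologicalSpace α] (T : α → α) : Prop :=
  let _i : MeasurableSpace α := borel α
  ∀ U : Set α, IsOpen U → U.Nonempty → ∀ ε : ℝ, 0 < ε →
    ∃ k : ℕ, 0 < k ∧ ∃ μ : Measure α, IsProbabilityMeasure μ ∧ μ.map (T^[k]) = μ ∧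
      μ Uᶜ < ENNReal.ofReal ε

def IsAlmostHYSystem {α : Type*} [TopologicalSpace α] (T : α → α) : Prop :=
  IsTotallyTransitive T ∧ AlmostDensePeriodicSets T

def IsFactorMap {α β : Type*} [TopologicalSpace α] [TopologicalSpace β]
    (T : α → α) (S : β → β) (π : α → β) : Prop :=
  Continuous π ∧ Surjective π ∧ π ∘ T = S ∘ π

def IsJoining {α β : Type*} [TopologicalSpace α] [TopologicalSpace β]
    (T : α → α) (S : β → β) (J : Set (α × β)) : Prop :=
  J.Nonempty ∧ IsClosed J ∧ MapsTo (Prod.map T S) J J ∧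
    Prod.fst '' J = Set.univ ∧ Prod.snd '' J = Set.univ

def AreDisjoint {α β : Type*} [TopologicalSpace α] [TopologicalSpace β]
    (T : α → α) (S : β → β) : Prop :=
  ∀ J : Set (α × β), IsJoining T S J → J = Set.univ

def IsMinimalSystem {β : Type*} [TopologicalSpace β] (S : β → β) : Prop :=
  ∀ Y : Set β, Y.Nonempty → IsClosed Y → MapsTo S Y Y → Y = Set.univ

/-- Disjoint from every minimal system (on a compact metric space). -/
def DisjointFromAllMinimal {α : Type*} [TopologicalSpace α] (T : α → α) : Prop :=
  ∀ (β : Type) (_ : MetricSpace β) (_ : CompactSpace β) (S : β → β),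
    Continuous S → Surjective S → IsMinimalSystem S → AreDisjoint T S

/-!
A point `x` of a compact system is distal iff `p-lim Sⁿx = x` for every idempotent
ultrafilter `p` on `ℕ`. In this form distality visibly passes to products and to
equivariant continuous images; hence the distal points of `K(X)` are closed under `⊔`, and
`x ↦ {x}` and the union map `K(K(X)) → K(X)` preserve distality. Density of distal points then
moves between `X`, `K(X)` and `K(K(X))` through the Vietoris basic sets `⟨U₁, …, Uₙ⟩`.

Weak mixing is Banks' theorem. If `T` is weakly mixing, Furstenberg's intersection lemma gives
infinitely many `n` with every `Uᵢ ∩ T⁻ⁿVⱼ` non-empty, and a finite set with one point in each of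
them is a point of `⟨u⟩ ∩ T_K⁻ⁿ⟨v⟩`. Conversely `N(⟨D⟩, ⟨V₁, V₂⟩) ⊆ N(D, V₁) ∩ N(D, V₂)`, which
already forces weak mixing of `T`.

On a compact metric space the Hausdorff metric induces the Vietoris topology (definitionally so in
Mathlib), so everything is done for the Vietoris topology.
-/

open Filter

attribute [local instance] Ultrafilter.add Ultrafilter.addSemigroup

theorem exists_ultrafilter_tendsto_of_mem_closure_range {α : Type*} [TopologicalSpace α]
    {f : ℕ → α} {y : α} (hy : y ∈ closure (range f)) :
    ∃ p : Ultrafilter ℕ, Tendsto f p (𝓝 y) := by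
  have : NeBot (comap f (𝓝 y)) := comap_neBot_iff.2 fun t ht => by
    obtain ⟨_, hzt, n, rfl⟩ := mem_closure_iff_nhds.1 hy t ht
    exact ⟨n, hzt⟩
  obtain ⟨p, hp⟩ := Ultrafilter.exists_le (comap f (𝓝 y))
  exact ⟨p, (map_mono hp).trans map_comap_le⟩

theorem exists_idempotent_of_isClosed {s : Set (Ultrafilter ℕ)} (hs : IsClosed s)
    (hne : s.Nonempty) (hadd : ∀ u ∈ s, ∀ v ∈ s, u + v ∈ s) : ∃ u ∈ s, u + u = u :=
  exists_idempotent_in_compact_add_subsemigroup Ultrafilter.continuous_add_left s hne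
    hs.isCompact hadd

section OrbitLim

variable {α β : Type*} [TopologicalSpace α] [CompactSpace α] [T2Space α]
  [TopologicalSpace β] [CompactSpace β] [T2Space β] {S : α → α} {S' : β → β}

/-- `p-lim Sⁿx`. -/
def orbitLim (S : α → α) (p : Ultrafilter ℕ) (x : α) : α :=
  Ultrafilter.extend (fun n => S^[n] x) p

theorem orbitLim_eq_iff {p : Ultrafilter ℕ} {x y : α} :
    orbitLim S p x = y ↔ Tendsto (fun n => S^[n] x) p (𝓝 y) :=
  ultrafilter_extend_eq_iff

theorem tendsto_orbitLim (S : α → α) (p : Ultrafilter ℕ) (x : α) :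
    Tendsto (fun n => S^[n] x) p (𝓝 (orbitLim S p x)) :=
  orbitLim_eq_iff.1 rfl

theorem continuous_orbitLim (S : α → α) (x : α) :
    Continuous fun p : Ultrafilter ℕ => orbitLim S p x :=
  continuous_ultrafilter_extend _

theorem orbitLim_mem_orbitClosure (S : α → α) (p : Ultrafilter ℕ) (x : α) :
    orbitLim S p x ∈ orbitClosure S x :=
  mem_closure_of_tendsto (tendsto_orbitLim S p x) (Eventually.of_forall mem_range_self)

theorem exists_orbitLim_eq_of_mem_orbitClosure {x y : α} (hy : y ∈ orbitClosure S x) :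
    ∃ p : Ultrafilter ℕ, orbitLim S p x = y := by
  obtain ⟨p, hp⟩ := exists_ultrafilter_tendsto_of_mem_closure_range hy
  exact ⟨p, orbitLim_eq_iff.2 hp⟩

theorem map_orbitLim {g : α → β} (hg : Continuous g) (h : Semiconj g S S')
    (p : Ultrafilter ℕ) (x : α) : g (orbitLim S p x) = orbitLim S' p (g x) := by
  refine (orbitLim_eq_iff.2 ?_).symm
  simpa only [comp_def, (h.iterate_right _).eq] using (hg.tendsto _).comp (tendsto_orbitLim S p x)

theorem orbitLim_prodMap (p : Ultrafilter ℕ) (x : α) (y : β) :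
    orbitLim (Prod.map S S') p (x, y) = (orbitLim S p x, orbitLim S' p y) := by
  rw [orbitLim_eq_iff]
  simpa only [Prod.map_iterate, Prod.map_apply, nhds_prod_eq]
    using (tendsto_orbitLim S p x).prodMk (tendsto_orbitLim S' p y)

theorem orbitLim_add (hS : Continuous S) (p q : Ultrafilter ℕ) (x : α) :
    orbitLim S (p + q) x = orbitLim S p (orbitLim S q x) := by
  refine orbitLim_eq_iff.2 fun W hW => ?_
  change ∀ᶠ k in ((p + q : Ultrafilter ℕ) : Filter ℕ), S^[k] x ∈ W
  rw [Ultrafilter.eventually_add]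
  filter_upwards [tendsto_orbitLim S p (orbitLim S q x) (eventually_eventually_nhds.2 hW)]
    with n hn
  filter_upwards [((hS.iterate n).tendsto _).comp (tendsto_orbitLim S q x) hn] with m hm
  rwa [iterate_add_apply]

theorem isProximalPair_iff_exists_orbitLim_eq {x y : α} :
    IsProximalPair S x y ↔ ∃ p : Ultrafilter ℕ, orbitLim S p x = orbitLim S p y := by
  constructor
  · rintro ⟨z, hz⟩
    obtain ⟨p, hp⟩ := exists_ultrafilter_tendsto_of_mem_closure_range hz
    exact ⟨p, (orbitLim_eq_iff.2 ((continuous_fst.tendsto _).comp hp)).trans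
      (orbitLim_eq_iff.2 ((continuous_snd.tendsto _).comp hp)).symm⟩
  · rintro ⟨p, hp⟩
    refine ⟨orbitLim S p x, mem_closure_of_tendsto (b := (p : Filter ℕ)) ?_
      (Eventually.of_forall mem_range_self)⟩
    rw [nhds_prod_eq]
    exact (tendsto_orbitLim S p x).prodMk (hp ▸ tendsto_orbitLim S p y)

theorem isDistalPoint_iff_forall_idempotent (hS : Continuous S) {x : α} :
    IsDistalPoint S x ↔ ∀ p : Ultrafilter ℕ, p + p = p → orbitLim S p x = x := by
  constructor
  · intro hx p hp
    refine hx _ (orbitLim_mem_orbitClosure S p x)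
      (isProximalPair_iff_exists_orbitLim_eq.2 ⟨p, ?_⟩)
    rw [← orbitLim_add hS, hp]
  · intro h y hy hxy
    obtain ⟨q, hq⟩ := exists_orbitLim_eq_of_mem_orbitClosure hy
    obtain ⟨r, hr⟩ := isProximalPair_iff_exists_orbitLim_eq.1 hxy
    obtain ⟨u, hu, huu⟩ := exists_idempotent_of_isClosed
      (isClosed_eq (continuous_orbitLim S x) (continuous_orbitLim S y)) ⟨r, hr⟩
      fun u _ v (hv : _ = _) => by simp only [mem_ofPred_eq, orbitLim_add hS, hv]
    have hux : orbitLim S u x = x := h u huu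
    -- `q + u` sends both `x` and `y` to `y`, and idempotents cannot move `x`.
    obtain ⟨v, ⟨hvx, -⟩, hvv⟩ := exists_idempotent_of_isClosed
      (s := {v | orbitLim S v x = y ∧ orbitLim S v y = y})
      ((isClosed_eq (continuous_orbitLim S x) continuous_const).inter
        (isClosed_eq (continuous_orbitLim S y) continuous_const))
      ⟨q + u, by rw [orbitLim_add hS, hux, hq], by rw [orbitLim_add hS, ← hu, hux, hq]⟩
      fun v ⟨_, hvy⟩ w ⟨hwx, hwy⟩ =>
        ⟨by rw [orbitLim_add hS, hwx, hvy], by rw [orbitLim_add hS, hwy, hvy]⟩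
    exact hvx.symm.trans (h v hvv)

theorem IsDistalPoint.map {x : α} (hx : IsDistalPoint S x) (hS : Continuous S)
    (hS' : Continuous S') {g : α → β} (hg : Continuous g) (h : Semiconj g S S') :
    IsDistalPoint S' (g x) := by
  rw [isDistalPoint_iff_forall_idempotent hS'] at *
  intro p hp
  rw [← map_orbitLim hg h, (isDistalPoint_iff_forall_idempotent hS).1 hx p hp]

theorem IsDistalPoint.prodMap {x : α} {y : β} (hx : IsDistalPoint S x) (hy : IsDistalPoint S' y)
    (hS : Continuous S) (hS' : Continuous S') : IsDistalPoint (Prod.map S S') (x, y) := by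
  rw [isDistalPoint_iff_forall_idempotent (hS.prodMap hS')]
  intro p hp
  rw [orbitLim_prodMap, (isDistalPoint_iff_forall_idempotent hS).1 hx p hp,
    (isDistalPoint_iff_forall_idempotent hS').1 hy p hp]

end OrbitLim

section HittingTimes

variable {α β : Type*} {T : α → α} {S : β → β}

/-- `N(U, V)`. -/
def hittingTimes (T : α → α) (U V : Set α) : Set ℕ :=
  {n | (U ∩ T^[n] ⁻¹' V).Nonempty}

theorem hittingTimes_mono {U U' V V' : Set α} (hU : U ⊆ U') (hV : V ⊆ V') :
    hittingTimes T U V ⊆ hittingTimes T U' V' :=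
  fun _ hn => hn.mono (inter_subset_inter hU (preimage_mono hV))

theorem hittingTimes_prodMap_prod (U₁ V₁ : Set α) (U₂ V₂ : Set β) :
    hittingTimes (Prod.map T S) (U₁ ×ˢ U₂) (V₁ ×ˢ V₂) =
      hittingTimes T U₁ V₁ ∩ hittingTimes S U₂ V₂ := by
  ext n
  simp only [hittingTimes, Prod.map_iterate, preimage_prod_map_prod, prod_inter_prod,
    mem_inter_iff, mem_ofPred_eq, prod_nonempty_iff]

variable [TopologicalSpace α]

theorem isWeaklyMixing_iff : IsWeaklyMixing T ↔
    ∀ U₁ V₁ U₂ V₂ : Set α, IsOpen U₁ → U₁.Nonempty → IsOpen V₁ → V₁.Nonempty →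
      IsOpen U₂ → U₂.Nonempty → IsOpen V₂ → V₂.Nonempty →
        (hittingTimes T U₁ V₁ ∩ hittingTimes T U₂ V₂).Infinite := by
  constructor
  · intro h U₁ V₁ U₂ V₂ hU₁ hU₁n hV₁ hV₁n hU₂ hU₂n hV₂ hV₂n
    rw [← hittingTimes_prodMap_prod]
    exact h _ _ (hU₁.prod hU₂) (hU₁n.prod hU₂n) (hV₁.prod hV₂) (hV₁n.prod hV₂n)
  · rintro h 𝒜 ℬ h𝒜 ⟨⟨a₁, a₂⟩, ha⟩ hℬ ⟨⟨b₁, b₂⟩, hb⟩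
    obtain ⟨U₁, U₂, hU₁, hU₂, ha₁, ha₂, hU⟩ := isOpen_prod_iff.1 h𝒜 a₁ a₂ ha
    obtain ⟨V₁, V₂, hV₁, hV₂, hb₁, hb₂, hV⟩ := isOpen_prod_iff.1 hℬ b₁ b₂ hb
    refine (h U₁ V₁ U₂ V₂ hU₁ ⟨a₁, ha₁⟩ hV₁ ⟨b₁, hb₁⟩ hU₂ ⟨a₂, ha₂⟩ hV₂ ⟨b₂, hb₂⟩).mono ?_
    rw [← hittingTimes_prodMap_prod]
    exact hittingTimes_mono hU hV

theorem IsWeaklyMixing.isTransitive (h : IsWeaklyMixing T) : IsTransitive T :=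
  fun U V hU hUn hV hVn => by
    have := isWeaklyMixing_iff.1 h U V U V hU hUn hV hVn hU hUn hV hVn
    rwa [inter_self] at this

theorem IsTransitive.preimage_iterate_nonempty (h : IsTransitive T) {V : Set α} (hV : IsOpen V)
    (hVn : V.Nonempty) (m : ℕ) : (T^[m] ⁻¹' V).Nonempty := by
  obtain ⟨n, ⟨x, -, hx⟩, hmn⟩ := (h V V hV hVn hV hVn).exists_gt m
  refine ⟨T^[n - m] x, ?_⟩
  rwa [mem_preimage, ← iterate_add_apply, Nat.add_sub_cancel' hmn.le]

/-- Furstenberg's intersection lemma. -/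
theorem IsWeaklyMixing.exists_hittingTimes_subset_inter (h : IsWeaklyMixing T)
    (hT : Continuous T) {U₁ V₁ U₂ V₂ : Set α} (hU₁ : IsOpen U₁) (hU₁n : U₁.Nonempty)
    (hV₁ : IsOpen V₁) (hV₁n : V₁.Nonempty) (hU₂ : IsOpen U₂) (hU₂n : U₂.Nonempty)
    (hV₂ : IsOpen V₂) (hV₂n : V₂.Nonempty) :
    ∃ U V : Set α, IsOpen U ∧ U.Nonempty ∧ IsOpen V ∧ V.Nonempty ∧
      hittingTimes T U V ⊆ hittingTimes T U₁ V₁ ∩ hittingTimes T U₂ V₂ := by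
  obtain ⟨n, ⟨a, haU₁, haU₂⟩, ⟨b, hbV₁, hbV₂⟩⟩ :=
    (isWeaklyMixing_iff.1 h U₁ U₂ V₁ V₂ hU₁ hU₁n hU₂ hU₂n hV₁ hV₁n hV₂ hV₂n).nonempty
  refine ⟨U₁ ∩ T^[n] ⁻¹' U₂, V₁ ∩ T^[n] ⁻¹' V₂, hU₁.inter (hU₂.preimage (hT.iterate n)),
    ⟨a, haU₁, haU₂⟩, hV₁.inter (hV₂.preimage (hT.iterate n)), ⟨b, hbV₁, hbV₂⟩, ?_⟩
  rintro m ⟨x, ⟨hxU₁, hxU₂⟩, hxV₁, hxV₂⟩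
  refine ⟨⟨x, hxU₁, hxV₁⟩, ⟨T^[n] x, hxU₂, ?_⟩⟩
  rwa [mem_preimage, ← iterate_add_apply, add_comm, iterate_add_apply]

theorem IsWeaklyMixing.infinite_biInter_hittingTimes [Nonempty α] (h : IsWeaklyMixing T)
    (hT : Continuous T) {P : Set (Set α × Set α)} (hP : P.Finite)
    (hPo : ∀ p ∈ P, IsOpen p.1 ∧ p.1.Nonempty ∧ IsOpen p.2 ∧ p.2.Nonempty) :
    (⋂ p ∈ P, hittingTimes T p.1 p.2).Infinite := by
  suffices ∃ U V : Set α, IsOpen U ∧ U.Nonempty ∧ IsOpen V ∧ V.Nonempty ∧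
      hittingTimes T U V ⊆ ⋂ p ∈ P, hittingTimes T p.1 p.2 by
    obtain ⟨U, V, hU, hUn, hV, hVn, hsub⟩ := this
    exact (h.isTransitive U V hU hUn hV hVn).mono hsub
  induction P, hP using Set.Finite.induction_on with
  | empty => exact ⟨univ, univ, isOpen_univ, univ_nonempty, isOpen_univ, univ_nonempty, by simp⟩
  | @insert q P _ _ ih =>
    obtain ⟨U, V, hU, hUn, hV, hVn, hsub⟩ := ih fun p hp => hPo p (mem_insert_of_mem q hp)
    obtain ⟨hq₁, hq₁n, hq₂, hq₂n⟩ := hPo q (mem_insert q P)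
    obtain ⟨U', V', hU', hU'n, hV', hV'n, hsub'⟩ :=
      h.exists_hittingTimes_subset_inter hT hq₁ hq₁n hq₂ hq₂n hU hUn hV hVn
    refine ⟨U', V', hU', hU'n, hV', hV'n, ?_⟩
    rw [biInter_insert]
    exact hsub'.trans (inter_subset_inter_right _ hsub)

end HittingTimes

section Hyperspace

variable {α : Type*} [TopologicalSpace α] {T : α → α}

theorem coe_TK (hT : Continuous T) (C : NonemptyCompacts α) :
    (TK T hT C : Set α) = T '' C :=
  rfl

theorem coe_TK_iterate (hT : Continuous T) (n : ℕ) (C : NonemptyCompacts α) :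
    ((TK T hT)^[n] C : Set α) = T^[n] '' C := by
  induction n with
  | zero => simp
  | succ n ih => rw [iterate_succ_apply', coe_TK, ih, ← image_comp, ← iterate_succ']

theorem continuous_TK (hT : Continuous T) : Continuous (TK T hT) :=
  hT.nonemptyCompacts_map

theorem semiconj_singleton_TK (hT : Continuous T) :
    Semiconj (fun x : α => ({x} : NonemptyCompacts α)) T (TK T hT) :=
  fun x => (NonemptyCompacts.map_singleton hT x).symm

theorem semiconj_sup_TK (hT : Continuous T) :
    Semiconj (fun p : NonemptyCompacts α × NonemptyCompacts α => p.1 ⊔ p.2)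
      (Prod.map (TK T hT) (TK T hT)) (TK T hT) :=
  fun p => NonemptyCompacts.ext (image_union T p.1 p.2).symm

def sUnionCompacts (𝒞 : NonemptyCompacts (NonemptyCompacts α)) : NonemptyCompacts α :=
  ⟨⟨⋃ K ∈ 𝒞, (K : Set α), NonemptyCompacts.isCompact_biUnion_coe_of_isCompact 𝒞.isCompact⟩,
    let ⟨K, hK⟩ := 𝒞.nonempty; K.nonempty.mono (subset_biUnion_of_mem hK)⟩

theorem coe_sUnionCompacts (𝒞 : NonemptyCompacts (NonemptyCompacts α)) :
    (sUnionCompacts 𝒞 : Set α) = ⋃ K ∈ 𝒞, (K : Set α) :=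
  rfl

theorem continuous_sUnionCompacts :
    Continuous (sUnionCompacts : NonemptyCompacts (NonemptyCompacts α) → NonemptyCompacts α) := by
  refine continuous_induced_rng.2 (continuous_generateFrom_iff.2 ?_)
  rintro _ (⟨U, hU, rfl⟩ | ⟨U, hU, rfl⟩)
  · convert NonemptyCompacts.isOpen_subsets_of_isOpen
      (NonemptyCompacts.isOpen_subsets_of_isOpen hU) using 1
    ext 𝒞
    exact iUnion₂_subset_iff
  · convert NonemptyCompacts.isOpen_inter_nonempty_of_isOpen
      (NonemptyCompacts.isOpen_inter_nonempty_of_isOpen hU) using 1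
    ext 𝒞
    change ((⋃ K ∈ 𝒞, (K : Set α)) ∩ U).Nonempty ↔ _
    simp only [iUnion₂_inter, nonempty_iUnion, exists_prop]
    rfl

theorem semiconj_sUnionCompacts_TK (hT : Continuous T) :
    Semiconj sUnionCompacts (TK (TK T hT) (continuous_TK hT)) (TK T hT) :=
  fun 𝒞 => NonemptyCompacts.ext <| by
    change ⋃ K ∈ TK T hT '' 𝒞, (K : Set α) = T '' ⋃ K ∈ 𝒞, (K : Set α)
    rw [biUnion_image, image_iUnion₂]
    rfl

/-- The Vietoris basic set `⟨U₁, …, Uₙ⟩` for `u = {U₁, …, Uₙ}`. -/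
def vietorisBasic (u : Set (Set α)) : Set (NonemptyCompacts α) :=
  {K | ↑K ⊆ ⋃₀ u ∧ ∀ U ∈ u, (↑K ∩ U).Nonempty}

theorem exists_vietorisBasic_subset {𝒰 : Set (NonemptyCompacts α)} (h𝒰 : IsOpen 𝒰)
    (hne : 𝒰.Nonempty) :
    ∃ u : Set (Set α), u.Finite ∧ u.Nonempty ∧ (∀ U ∈ u, IsOpen U ∧ U.Nonempty) ∧
      vietorisBasic u ⊆ 𝒰 := by
  obtain ⟨K, hK⟩ := hne
  obtain ⟨_, ⟨u, ⟨hu, hun, huo⟩, rfl⟩, hKu, hsub⟩ :=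
    NonemptyCompacts.isTopologicalBasis.exists_subset_of_mem_open hK h𝒰
  exact ⟨u, hu, hun, fun U hU => ⟨huo U hU, (hKu.2 U hU).mono inter_subset_right⟩, hsub⟩

theorem isOpen_vietorisBasic {u : Set (Set α)} (hu : u.Finite) (hun : u.Nonempty)
    (huo : ∀ U ∈ u, IsOpen U) : IsOpen (vietorisBasic u) :=
  NonemptyCompacts.isTopologicalBasis.isOpen ⟨u, ⟨hu, hun, huo⟩, rfl⟩

end Hyperspace

section Banks

variable {α : Type*} [TopologicalSpace α] {T : α → α}

theorem biInter_hittingTimes_subset_hittingTimes_TK (hT : Continuous T) {u v : Set (Set α)}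
    (hu : u.Finite) (hv : v.Finite) (hun : u.Nonempty) (hvn : v.Nonempty) :
    ⋂ p ∈ u ×ˢ v, hittingTimes T p.1 p.2 ⊆
      hittingTimes (TK T hT) (vietorisBasic u) (vietorisBasic v) := by
  intro n hn
  simp only [mem_iInter₂] at hn
  obtain ⟨U₀, hU₀⟩ := hun
  obtain ⟨V₀, hV₀⟩ := hvn
  have : Nonempty α := ⟨(hn (U₀, V₀) ⟨hU₀, hV₀⟩).some⟩
  choose! f hfU hfV using hn
  let K : NonemptyCompacts α :=
    ⟨⟨f '' u ×ˢ v, ((hu.prod hv).image f).isCompact⟩, ⟨f (U₀, V₀), mem_image_of_mem f ⟨hU₀, hV₀⟩⟩⟩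
  refine ⟨K, ⟨?_, fun U hU => ⟨f (U, V₀), mem_image_of_mem f ⟨hU, hV₀⟩, hfU (U, V₀) ⟨hU, hV₀⟩⟩⟩, ?_⟩
  · rintro _ ⟨p, hp, rfl⟩
    exact ⟨p.1, hp.1, hfU p hp⟩
  rw [mem_preimage, vietorisBasic, mem_ofPred_eq, coe_TK_iterate]
  refine ⟨?_, fun V hV => ⟨T^[n] (f (U₀, V)),
    mem_image_of_mem _ (mem_image_of_mem f ⟨hU₀, hV⟩), hfV (U₀, V) ⟨hU₀, hV⟩⟩⟩
  rintro _ ⟨_, ⟨p, hp, rfl⟩, rfl⟩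
  exact ⟨p.2, hp.2, hfV p hp⟩

theorem IsWeaklyMixing.hyperspace (h : IsWeaklyMixing T) (hT : Continuous T) :
    IsWeaklyMixing (TK T hT) := by
  refine isWeaklyMixing_iff.2 fun 𝒰₁ 𝒱₁ 𝒰₂ 𝒱₂ h𝒰₁ h𝒰₁n h𝒱₁ h𝒱₁n h𝒰₂ h𝒰₂n h𝒱₂ h𝒱₂n => ?_
  obtain ⟨u₁, hu₁, hu₁n, hu₁o, hu₁𝒰⟩ := exists_vietorisBasic_subset h𝒰₁ h𝒰₁n
  obtain ⟨v₁, hv₁, hv₁n, hv₁o, hv₁𝒱⟩ := exists_vietorisBasic_subset h𝒱₁ h𝒱₁n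
  obtain ⟨u₂, hu₂, hu₂n, hu₂o, hu₂𝒰⟩ := exists_vietorisBasic_subset h𝒰₂ h𝒰₂n
  obtain ⟨v₂, hv₂, hv₂n, hv₂o, hv₂𝒱⟩ := exists_vietorisBasic_subset h𝒱₂ h𝒱₂n
  have : Nonempty α := ⟨h𝒰₁n.some.nonempty.some⟩
  refine (h.infinite_biInter_hittingTimes hT ((hu₁.prod hv₁).union (hu₂.prod hv₂)) ?_).mono ?_
  · rintro p (⟨hp₁, hp₂⟩ | ⟨hp₁, hp₂⟩)
    · exact ⟨(hu₁o _ hp₁).1, (hu₁o _ hp₁).2, (hv₁o _ hp₂).1, (hv₁o _ hp₂).2⟩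
    · exact ⟨(hu₂o _ hp₁).1, (hu₂o _ hp₁).2, (hv₂o _ hp₂).1, (hv₂o _ hp₂).2⟩
  rw [biInter_union]
  exact inter_subset_inter
    ((biInter_hittingTimes_subset_hittingTimes_TK hT hu₁ hv₁ hu₁n hv₁n).trans
      (hittingTimes_mono hu₁𝒰 hv₁𝒱))
    ((biInter_hittingTimes_subset_hittingTimes_TK hT hu₂ hv₂ hu₂n hv₂n).trans
      (hittingTimes_mono hu₂𝒰 hv₂𝒱))

theorem isWeaklyMixing_of_forall_infinite_inter (hT : Continuous T)
    (h : ∀ D V₁ V₂ : Set α, IsOpen D → D.Nonempty → IsOpen V₁ → V₁.Nonempty →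
      IsOpen V₂ → V₂.Nonempty → (hittingTimes T D V₁ ∩ hittingTimes T D V₂).Infinite) :
    IsWeaklyMixing T := by
  have hTt : IsTransitive T := fun U V hU hUn hV hVn =>
    (h U V V hU hUn hV hVn hV hVn).mono inter_subset_left
  refine isWeaklyMixing_iff.2 fun U₁ V₁ U₂ V₂ hU₁ hU₁n hV₁ hV₁n hU₂ hU₂n hV₂ hV₂n => ?_
  obtain ⟨m, hm⟩ := (hTt U₁ U₂ hU₁ hU₁n hU₂ hU₂n).nonempty
  -- if `x, x' ∈ U₁ ∩ T^[m] ⁻¹' U₂` then `(x, T^[m] x') ∈ U₁ × U₂`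
  refine (h (U₁ ∩ T^[m] ⁻¹' U₂) V₁ (T^[m] ⁻¹' V₂) (hU₁.inter (hU₂.preimage (hT.iterate m))) hm
    hV₁ hV₁n (hV₂.preimage (hT.iterate m)) (hTt.preimage_iterate_nonempty hV₂ hV₂n m)).mono ?_
  rintro k ⟨hk₁, x, ⟨-, hx⟩, hkx⟩
  refine ⟨hittingTimes_mono inter_subset_left subset_rfl hk₁, T^[m] x, hx, ?_⟩
  rwa [mem_preimage, ← iterate_add_apply, add_comm, iterate_add_apply]

theorem hittingTimes_TK_subsets_subset (hT : Continuous T) (D V₁ V₂ : Set α) :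
    hittingTimes (TK T hT) {K | ↑K ⊆ D} (vietorisBasic {V₁, V₂}) ⊆
      hittingTimes T D V₁ ∩ hittingTimes T D V₂ := by
  rintro n ⟨K, hKD, -, hK⟩
  rw [coe_TK_iterate] at hK
  obtain ⟨_, ⟨x₁, hx₁, rfl⟩, h₁⟩ := hK V₁ (mem_insert _ _)
  obtain ⟨_, ⟨x₂, hx₂, rfl⟩, h₂⟩ := hK V₂ (mem_insert_of_mem _ rfl)
  exact ⟨⟨x₁, hKD hx₁, h₁⟩, ⟨x₂, hKD hx₂, h₂⟩⟩

theorem IsTransitive.isWeaklyMixing_of_hyperspace (hT : Continuous T)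
    (h : IsTransitive (TK T hT)) : IsWeaklyMixing T := by
  refine isWeaklyMixing_of_forall_infinite_inter hT
    fun D V₁ V₂ hD ⟨d, hd⟩ hV₁ ⟨v₁, hv₁⟩ hV₂ ⟨v₂, hv₂⟩ => ?_
  refine (h _ _ (NonemptyCompacts.isOpen_subsets_of_isOpen hD) ⟨{d}, singleton_subset_iff.2 hd⟩
    (isOpen_vietorisBasic (toFinite _) (insert_nonempty _ _) ?_) ⟨{v₁} ⊔ {v₂}, ?_⟩).mono
    (hittingTimes_TK_subsets_subset hT D V₁ V₂)
  · rintro U (rfl | rfl)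
    exacts [hV₁, hV₂]
  · refine ⟨?_, ?_⟩
    · rintro x (rfl | rfl)
      exacts [⟨V₁, mem_insert _ _, hv₁⟩, ⟨V₂, mem_insert_of_mem _ rfl, hv₂⟩]
    · rintro U (rfl | rfl)
      exacts [⟨v₁, Or.inl rfl, hv₁⟩, ⟨v₂, Or.inr rfl, hv₂⟩]

end Banks

section DistalSets

variable {α : Type*} [TopologicalSpace α] {T : α → α}

def HasDenseDistalSets (T : α → α) (hT : Continuous T) : Prop :=
  ∀ U : Set α, IsOpen U → U.Nonempty →
    ∃ C : NonemptyCompacts α, IsDistalPoint (TK T hT) C ∧ (C : Set α) ⊆ U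

theorem NonemptyCompacts.dense_of_supClosed {D : Set (NonemptyCompacts α)} (hD : SupClosed D)
    (h : ∀ U : Set α, IsOpen U → U.Nonempty → ∃ C ∈ D, (C : Set α) ⊆ U) : Dense D := by
  refine dense_iff_inter_open.2 fun 𝒰 h𝒰 h𝒰n => ?_
  obtain ⟨u, hu, hun, huo, hu𝒰⟩ := exists_vietorisBasic_subset h𝒰 h𝒰n
  have : Nonempty α := ⟨h𝒰n.some.nonempty.some⟩
  choose! C hCD hCU using fun U hU => h U (huo U hU).1 (huo U hU).2
  have hun' : hu.toFinset.Nonempty := by simpa using hun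
  refine ⟨hu.toFinset.sup' hun' C, hu𝒰 ⟨?_, fun U hU => ?_⟩,
    hD.finsetSup'_mem hun' fun U hU => hCD U (hu.mem_toFinset.1 hU)⟩
  · refine Finset.sup'_induction hun' C (p := fun K => (K : Set α) ⊆ ⋃₀ u)
      (fun _ hA _ hB => union_subset hA hB) fun U hU => ?_
    exact (hCU U (hu.mem_toFinset.1 hU)).trans (subset_sUnion_of_mem (hu.mem_toFinset.1 hU))
  · have hle : (C U : Set α) ⊆ (hu.toFinset.sup' hun' C : NonemptyCompacts α) :=
      SetLike.coe_subset_coe.2 (Finset.le_sup' C (hu.mem_toFinset.2 hU))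
    exact (C U).nonempty.mono (subset_inter hle (hCU U hU))

theorem hasDenseDistalSets_of_dense_hyperspace {hT : Continuous T}
    (h : Dense {C : NonemptyCompacts α | IsDistalPoint (TK T hT) C}) : HasDenseDistalSets T hT :=
  fun _ hU ⟨x, hx⟩ => h.exists_mem_open (NonemptyCompacts.isOpen_subsets_of_isOpen hU)
    ⟨{x}, singleton_subset_iff.2 hx⟩

theorem HasDenseDistalSets.of_hyperspace [CompactSpace α] [T2Space α] {hT : Continuous T}
    (h : HasDenseDistalSets (TK T hT) (continuous_TK hT)) : HasDenseDistalSets T hT := by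
  intro U hU hUn
  obtain ⟨𝒞, h𝒞, h𝒞U⟩ := h _ (NonemptyCompacts.isOpen_subsets_of_isOpen hU)
    (let ⟨x, hx⟩ := hUn; ⟨{x}, singleton_subset_iff.2 hx⟩)
  refine ⟨sUnionCompacts 𝒞, h𝒞.map (continuous_TK _) (continuous_TK hT)
    continuous_sUnionCompacts (semiconj_sUnionCompacts_TK hT), ?_⟩
  exact iUnion₂_subset fun K hK => h𝒞U hK

variable [CompactSpace α] [T2Space α]

theorem supClosed_setOf_isDistalPoint_TK (hT : Continuous T) :
    SupClosed {C : NonemptyCompacts α | IsDistalPoint (TK T hT) C} :=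
  fun _ hA _ hB => (hA.prodMap hB (continuous_TK hT) (continuous_TK hT)).map
    ((continuous_TK hT).prodMap (continuous_TK hT)) (continuous_TK hT) continuous_sup
    (semiconj_sup_TK hT)

theorem HasDenseDistalSets.dense {hT : Continuous T} (h : HasDenseDistalSets T hT) :
    Dense {C : NonemptyCompacts α | IsDistalPoint (TK T hT) C} :=
  NonemptyCompacts.dense_of_supClosed (supClosed_setOf_isDistalPoint_TK hT) h

theorem hasDenseDistalSets_of_dense (hT : Continuous T) (h : Dense {x : α | IsDistalPoint T x}) :
    HasDenseDistalSets T hT := fun _ hU hUn =>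
  let ⟨x, hx, hxU⟩ := h.exists_mem_open hU hUn
  ⟨{x}, hx.map hT (continuous_TK hT) NonemptyCompacts.continuous_singleton
    (semiconj_singleton_TK hT), singleton_subset_iff.2 hxU⟩

end DistalSets

theorem dense_distal_sets_iff_hyperspace_general {X : Type*} [MetricSpace X] [CompactSpace X]
    (T : X → X) (hT : Continuous T)
    (hTK : Continuous (TK T hT)) :
    ((IsWeaklyMixing T ∧ ∀ U : Set X, IsOpen U → U.Nonempty →
        ∃ C : NonemptyCompacts X, IsDistalPoint (TK T hT) C ∧ (C : Set X) ⊆ U) ↔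
      (IsWeaklyMixing (TK T hT) ∧
        Dense {C : NonemptyCompacts X | IsDistalPoint (TK T hT) C})) ∧
    ((IsWeaklyMixing (TK T hT) ∧
        Dense {C : NonemptyCompacts X | IsDistalPoint (TK T hT) C}) ↔
      (IsWeaklyMixing (TK T hT) ∧
        ∀ U : Set (NonemptyCompacts X), IsOpen U → U.Nonempty →
          ∃ C : NonemptyCompacts (NonemptyCompacts X),
            IsDistalPoint (TK (TK T hT) hTK) C ∧ (C : Set (NonemptyCompacts X)) ⊆ U)) :=
  ⟨⟨fun ⟨hmix, hsets⟩ => ⟨hmix.hyperspace hT, HasDenseDistalSets.dense hsets⟩,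
    fun ⟨hmix, hdense⟩ => ⟨hmix.isTransitive.isWeaklyMixing_of_hyperspace hT,
      hasDenseDistalSets_of_dense_hyperspace hdense⟩⟩,
   ⟨fun ⟨hmix, hdense⟩ => ⟨hmix, hasDenseDistalSets_of_dense hTK hdense⟩,
    fun ⟨hmix, hsets⟩ => ⟨hmix, (HasDenseDistalSets.of_hyperspace hsets).dense⟩⟩⟩

theorem dense_distal_sets_iff_hyperspace {X : Type*} [MetricSpace X] [CompactSpace X]
    (T : X → X) (hT : Continuous T) (hTs : Surjective T)
    (hTK : Continuous (TK T hT)) :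
    ((IsWeaklyMixing T ∧ ∀ U : Set X, IsOpen U → U.Nonempty →
        ∃ C : NonemptyCompacts X, IsDistalPoint (TK T hT) C ∧ (C : Set X) ⊆ U) ↔
      (IsWeaklyMixing (TK T hT) ∧
        Dense {C : NonemptyCompacts X | IsDistalPoint (TK T hT) C})) ∧
    ((IsWeaklyMixing (TK T hT) ∧
        Dense {C : NonemptyCompacts X | IsDistalPoint (TK T hT) C}) ↔
      (IsWeaklyMixing (TK T hT) ∧
        ∀ U : Set (NonemptyCompacts X), IsOpen U → U.Nonempty →
          ∃ C : NonemptyCompacts (NonemptyCompacts X),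
            IsDistalPoint (TK (TK T hT) hTK) C ∧ (C : Set (NonemptyCompacts X)) ⊆ U)) :=
  dense_distal_sets_iff_hyperspace_general T hT hTK

end Paper
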